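/- arXiv:1511.01299 — 4 statements merged into one kernel-verified Lean document; each statement's English description precedes it below -/
import Mathlib

section
/- Let Δ = 16A³ + AB² − 4A(C²+D²+E²) + 4CDE, a cubic form on ℂ⁵. For a nonzero vector v = (A,B,C,D,E) ∈ ℂ⁵, all five partial derivatives of Δ vanish at v if and only if v is a nonzero scalar multiple of one of the ten vectors (1,0,−2,−2,2), (1,0,−2,2,−2), (1,0,2,−2,−2), (1,0,2,2,2), (0,−2,1,0,0), (0,2,1,0,0), (0,−2,0,1,0), (0,2,0,1,0), (0,−2,0,0,1), (0,2,0,0,1). In other words, the Segre cubic S₃ = {Δ = 0} ⊂ ℙ⁴(ℂ) has exactly these ten singular points (its ten nodes). -/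
/-- The Segre cubic `{Δ = 0} ⊂ ℙ⁴(ℂ)` has exactly ten singular points (its ten
nodes): a nonzero `(A,B,C,D,E)` is a common zero of all five partial
derivatives of `Δ` if and only if it is a nonzero scalar multiple of one of the
ten listed vectors. -/
theorem stmt4 (A B C D E : ℂ) (hp : ¬(A = 0 ∧ B = 0 ∧ C = 0 ∧ D = 0 ∧ E = 0)) :
    (48 * A ^ 2 + B ^ 2 - 4 * (C ^ 2 + D ^ 2 + E ^ 2) = 0 ∧
     2 * A * B = 0 ∧
     -8 * A * C + 4 * D * E = 0 ∧
     -8 * A * D + 4 * C * E = 0 ∧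
     -8 * A * E + 4 * C * D = 0) ↔
    (∃ t : ℂ, t ≠ 0 ∧
      ((A, B, C, D, E) = (t * 1, t * 0, t * (-2), t * (-2), t * 2) ∨
       (A, B, C, D, E) = (t * 1, t * 0, t * (-2), t * 2, t * (-2)) ∨
       (A, B, C, D, E) = (t * 1, t * 0, t * 2, t * (-2), t * (-2)) ∨
       (A, B, C, D, E) = (t * 1, t * 0, t * 2, t * 2, t * 2) ∨
       (A, B, C, D, E) = (t * 0, t * (-2), t * 1, t * 0, t * 0) ∨
       (A, B, C, D, E) = (t * 0, t * 2, t * 1, t * 0, t * 0) ∨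
       (A, B, C, D, E) = (t * 0, t * (-2), t * 0, t * 1, t * 0) ∨
       (A, B, C, D, E) = (t * 0, t * 2, t * 0, t * 1, t * 0) ∨
       (A, B, C, D, E) = (t * 0, t * (-2), t * 0, t * 0, t * 1) ∨
       (A, B, C, D, E) = (t * 0, t * 2, t * 0, t * 0, t * 1))) := by
  constructor
  · rintro ⟨h1, h2, h3, h4, h5⟩
    by_cases hA : A = 0
    · subst hA
      by_cases hC : C = 0
      · subst hC
        by_cases hD : D = 0
        · subst hD
          by_cases hE : E = 0
          · subst hE
            exfalso
            apply hp
            have hB : B = 0 := by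
              have hB2 : B ^ 2 = 0 := by linear_combination h1
              exact pow_eq_zero_iff (n := 2) (by norm_num) |>.mp hB2
            exact ⟨rfl, hB, rfl, rfl, rfl⟩
          · -- only E nonzero
            have hfac : (B - 2 * E) * (B + 2 * E) = 0 := by linear_combination h1
            rcases mul_eq_zero.mp hfac with h | h
            · have hB : B = 2 * E := by linear_combination h
              subst hB
              refine ⟨E, hE, ?_⟩
              right; right; right; right; right; right; right; right; right
              simp only [Prod.mk.injEq]; exact ⟨by ring, by ring, by ring, by ring, by ring⟩
            · have hB : B = -2 * E := by linear_combination h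
              subst hB
              refine ⟨E, hE, ?_⟩
              right; right; right; right; right; right; right; right; left
              simp only [Prod.mk.injEq]; exact ⟨by ring, by ring, by ring, by ring, by ring⟩
        · -- D nonzero, C = 0
          have hE : E = 0 := by
            have hDE : D * E = 0 := by linear_combination h3 / 4
            rcases mul_eq_zero.mp hDE with h | h
            · exact absurd h hD
            · exact h
          subst hE
          have hfac : (B - 2 * D) * (B + 2 * D) = 0 := by linear_combination h1
          rcases mul_eq_zero.mp hfac with h | h
          · have hB : B = 2 * D := by linear_combination h
            subst hB
            refine ⟨D, hD, ?_⟩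
            right; right; right; right; right; right; right; left
            simp only [Prod.mk.injEq]; exact ⟨by ring, by ring, by ring, by ring, by ring⟩
          · have hB : B = -2 * D := by linear_combination h
            subst hB
            refine ⟨D, hD, ?_⟩
            right; right; right; right; right; right; left
            simp only [Prod.mk.injEq]; exact ⟨by ring, by ring, by ring, by ring, by ring⟩
      · -- C nonzero
        have hE : E = 0 := by
          have hCE : C * E = 0 := by linear_combination h4 / 4
          rcases mul_eq_zero.mp hCE with h | h
          · exact absurd h hC
          · exact h
        have hD : D = 0 := by
          have hCD : C * D = 0 := by linear_combination h5 / 4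
          rcases mul_eq_zero.mp hCD with h | h
          · exact absurd h hC
          · exact h
        subst hE; subst hD
        have hfac : (B - 2 * C) * (B + 2 * C) = 0 := by linear_combination h1
        rcases mul_eq_zero.mp hfac with h | h
        · have hB : B = 2 * C := by linear_combination h
          subst hB
          refine ⟨C, hC, ?_⟩
          right; right; right; right; right; left
          simp only [Prod.mk.injEq]; exact ⟨by ring, by ring, by ring, by ring, by ring⟩
        · have hB : B = -2 * C := by linear_combination h
          subst hB
          refine ⟨C, hC, ?_⟩
          right; right; right; right; left
          simp only [Prod.mk.injEq]; exact ⟨by ring, by ring, by ring, by ring, by ring⟩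
    · -- A ≠ 0
      have hB : B = 0 := by
        rcases mul_eq_zero.mp h2 with h | h
        · rcases mul_eq_zero.mp h with h' | h'
          · exact absurd h' two_ne_zero
          · exact absurd h' hA
        · exact h
      subst hB
      have hC : C ≠ 0 := by
        intro hC0
        apply hA
        have hD : D = 0 := by
          have h2AD : 2 * A * D = 0 := by linear_combination (-1/4) * h4 + E * hC0
          rcases mul_eq_zero.mp h2AD with h | h
          · rcases mul_eq_zero.mp h with h' | h'
            · exact absurd h' two_ne_zero
            · exact absurd h' hA
          · exact h
        have hE : E = 0 := by
          have h2AE : 2 * A * E = 0 := by linear_combination (-1/4) * h5 + D * hC0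
          rcases mul_eq_zero.mp h2AE with h | h
          · rcases mul_eq_zero.mp h with h' | h'
            · exact absurd h' two_ne_zero
            · exact absurd h' hA
          · exact h
        have hA2 : A ^ 2 = 0 := by
          linear_combination h1 / 48 + (C / 12) * hC0 + (D / 12) * hD + (E / 12) * hE
        exact pow_eq_zero_iff (n := 2) (by norm_num) |>.mp hA2
      have hD : D ≠ 0 := by
        intro hD0
        apply hC
        have h2AC : 2 * A * C = 0 := by linear_combination (-1/4) * h3 + E * hD0
        rcases mul_eq_zero.mp h2AC with h | h
        · rcases mul_eq_zero.mp h with h' | h'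
          · exact absurd h' two_ne_zero
          · exact absurd h' hA
        · exact h
      have hE : E ≠ 0 := by
        intro hE0
        apply hC
        have h2AC : 2 * A * C = 0 := by linear_combination (-1/4) * h3 + D * hE0
        rcases mul_eq_zero.mp h2AC with h | h
        · rcases mul_eq_zero.mp h with h' | h'
          · exact absurd h' two_ne_zero
          · exact absurd h' hA
        · exact h
      have hCsq : (C - 2 * A) * (C + 2 * A) = 0 := by
        have hkey : D * ((C - 2 * A) * (C + 2 * A)) = 0 := by
          linear_combination (C / 4) * h5 + (A / 2) * h4
        rcases mul_eq_zero.mp hkey with h | h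
        · exact absurd h hD
        · exact h
      have hDsq : (D - 2 * A) * (D + 2 * A) = 0 := by
        have hkey : C * ((D - 2 * A) * (D + 2 * A)) = 0 := by
          linear_combination (D / 4) * h5 + (A / 2) * h3
        rcases mul_eq_zero.mp hkey with h | h
        · exact absurd h hC
        · exact h
      have hEsq : (E - 2 * A) * (E + 2 * A) = 0 := by
        have hkey : C * ((E - 2 * A) * (E + 2 * A)) = 0 := by
          linear_combination (E / 4) * h4 + (A / 2) * h3
        rcases mul_eq_zero.mp hkey with h | h
        · exact absurd h hC
        · exact h
      have hCv : C = 2 * A ∨ C = -2 * A := by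
        rcases mul_eq_zero.mp hCsq with h | h
        · exact Or.inl (by linear_combination h)
        · exact Or.inr (by linear_combination h)
      have hDv : D = 2 * A ∨ D = -2 * A := by
        rcases mul_eq_zero.mp hDsq with h | h
        · exact Or.inl (by linear_combination h)
        · exact Or.inr (by linear_combination h)
      have hEv : E = 2 * A ∨ E = -2 * A := by
        rcases mul_eq_zero.mp hEsq with h | h
        · exact Or.inl (by linear_combination h)
        · exact Or.inr (by linear_combination h)
      have hA2 : A ^ 2 ≠ 0 := pow_ne_zero 2 hA
      rcases hCv with hc | hc <;> rcases hDv with hd | hd <;> rcases hEv with he | he <;>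
        subst hc <;> subst hd <;> subst he
      · refine ⟨A, hA, ?_⟩
        right; right; right; left
        simp only [Prod.mk.injEq]; exact ⟨by ring, by ring, by ring, by ring, by ring⟩
      · exfalso; apply hA2; linear_combination -h3 / 32
      · exfalso; apply hA2; linear_combination -h3 / 32
      · refine ⟨A, hA, ?_⟩
        right; right; left
        simp only [Prod.mk.injEq]; exact ⟨by ring, by ring, by ring, by ring, by ring⟩
      · exfalso; apply hA2; linear_combination h3 / 32
      · refine ⟨A, hA, ?_⟩
        right; left
        simp only [Prod.mk.injEq]; exact ⟨by ring, by ring, by ring, by ring, by ring⟩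
      · refine ⟨A, hA, ?_⟩
        left
        simp only [Prod.mk.injEq]; exact ⟨by ring, by ring, by ring, by ring, by ring⟩
      · exfalso; apply hA2; linear_combination h3 / 32
  · rintro ⟨t, ht, h⟩
    rcases h with h | h | h | h | h | h | h | h | h | h <;>
      · simp only [Prod.mk.injEq] at h
        obtain ⟨hA, hB, hC, hD, hE⟩ := h
        subst hA; subst hB; subst hC; subst hD; subst hE
        exact ⟨by ring, by ring, by ring, by ring, by ring⟩
end

section
/- Let F be a nonzero homogeneous polynomial of degree 4 in four variables over ℂ. Suppose there exist a nonzero homogeneous linear form ℓ, a homogeneous quadratic form Q, and a homogeneous cubic form G in the same four variables such that F = Q² + ℓ·G. Then there exists a nonzero vector v ∈ ℂ⁴ at which all four partial derivatives of F vanish. In particular, a quartic surface in ℙ³(ℂ) possessing a trope (a plane whose intersection with the surface is a conic counted with multiplicity two) is necessarily singular. -/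
/-!
The linear, quadratic and cubic forms `ℓ`, `Q`, `G` all vanish at the origin of `ℂ⁴`. If that
were their only common zero, the Nullstellensatz would make the radical of `(ℓ, Q, G)` the
maximal ideal of the origin, which has height `4`; but by Krull's height theorem a minimal prime
over an ideal with three generators has height at most `3`. So they share a zero `v ≠ 0`, and
since `∂F = 2 Q ∂Q + G ∂ℓ + ℓ ∂G`, all partial derivatives of `F` vanish at `v`.
-/

open MvPolynomial

namespace MvPolynomial

variable {k σ : Type*}

lemma IsHomogeneous.constantCoeff_eq_zero [CommSemiring k] {p : MvPolynomial σ k} {n : ℕ}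
    (hp : p.IsHomogeneous n) (hn : n ≠ 0) : constantCoeff p = 0 := by
  rw [constantCoeff_eq]
  exact hp.coeff_eq_zero (by simpa using hn.symm)

variable [Field k]

noncomputable def translate (a : σ → k) : MvPolynomial σ k ≃ₐ[k] MvPolynomial σ k :=
  AlgEquiv.ofAlgHom (aeval fun i => X i + C (a i)) (aeval fun i => X i - C (a i))
    (by ext i; simp) (by ext i; simp)

lemma eval_translate (a x : σ → k) (p : MvPolynomial σ k) :
    eval x (translate a p) = eval (x + a) p := by
  have h : (aeval x).comp (aeval fun i => X i + C (a i)) = aeval (x + a) := by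
    ext i; simp
  exact DFunLike.congr_fun h p

lemma vanishingIdeal_singleton_eq_comap_translate (a : σ → k) :
    vanishingIdeal k {a} = (vanishingIdeal k {(0 : σ → k)}).comap (translate a).toRingEquiv := by
  ext p
  simp [eval_translate]

variable [IsAlgClosed k] [Finite σ]

lemma height_vanishingIdeal_singleton (a : σ → k) :
    (vanishingIdeal k {a} : Ideal (MvPolynomial σ k)).height = Nat.card σ := by
  have hconst : ∀ x : σ → k, (vanishingIdeal k {x} : Ideal (MvPolynomial σ k)).height
      = (vanishingIdeal k {(0 : σ → k)}).height := fun x => by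
    rw [vanishingIdeal_singleton_eq_comap_translate x, RingEquiv.height_comap]
  -- the maximal ideals are the ideals of points, and the supremum of their heights is the dimension
  have hsup := Ideal.sup_isMaximal_height_eq_ringKrullDim (R := MvPolynomial σ k)
  rw [MvPolynomial.ringKrullDim_of_isNoetherianRing, ringKrullDim_eq_zero_of_field, zero_add]
    at hsup
  have hsup_eq : ⨆ (I : Ideal (MvPolynomial σ k)) (_ : I.IsMaximal), I.height
      = (vanishingIdeal k {(0 : σ → k)}).height := by
    refine le_antisymm (iSup₂_le fun I hI => ?_) (le_iSup₂_of_le _ inferInstance le_rfl)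
    obtain ⟨x, rfl⟩ := eq_vanishingIdeal_singleton_of_isMaximal k hI
    exact (hconst x).le
  rw [hconst, ← hsup_eq]
  exact_mod_cast hsup

theorem exists_ne_zero_forall_eval_eq_zero_of_card_lt (s : Finset (MvPolynomial σ k))
    (hs : s.card < Nat.card σ) (h0 : ∀ p ∈ s, constantCoeff p = 0) :
    ∃ x ≠ 0, ∀ p ∈ s, eval x p = 0 := by
  by_contra! h
  set I := Ideal.span (s : Set (MvPolynomial σ k))
  set m := (vanishingIdeal k {(0 : σ → k)} : Ideal (MvPolynomial σ k))
  have hIm : I ≤ m := Ideal.span_le.mpr fun p hp => by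
    simpa [m] using h0 p hp
  have hzero : zeroLocus k I ⊆ {0} := fun x hx => by
    by_contra hx0
    obtain ⟨p, hp, hpx⟩ := h x hx0
    exact hpx (by simpa using hx p (Ideal.subset_span hp))
  have hrad : I.radical = m := by
    refine le_antisymm ((Ideal.IsPrime.radical_le_iff inferInstance).mpr hIm) ?_
    rw [← vanishingIdeal_zeroLocus_eq_radical (K := k)]
    exact vanishingIdeal_anti_mono hzero
  have hmin : m ∈ I.minimalPrimes := by
    rw [← Ideal.radical_minimalPrimes, hrad, Ideal.minimalPrimes_eq_subsingleton_self]
    rfl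
  have hheight := Ideal.height_le_card_of_mem_minimalPrimes_span_finset hmin
  rw [height_vanishingIdeal_singleton] at hheight
  exact absurd hheight (by exact_mod_cast hs.not_ge)

end MvPolynomial

theorem stmt9_general (F Q ℓ G : MvPolynomial (Fin 4) ℂ)
    (hQ : Q.IsHomogeneous 2)
    (hℓ : ℓ.IsHomogeneous 1)
    (hG : G.IsHomogeneous 3)
    (hFQG : F = Q ^ 2 + ℓ * G) :
    ∃ v : Fin 4 → ℂ, v ≠ 0 ∧ ∀ i : Fin 4, eval v (pderiv i F) = 0 := by
  obtain ⟨v, hv0, hv⟩ := exists_ne_zero_forall_eval_eq_zero_of_card_lt {Q, ℓ, G}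
    (Finset.card_le_three.trans_lt (by simp))
    (by simp [hQ.constantCoeff_eq_zero two_ne_zero, hℓ.constantCoeff_eq_zero one_ne_zero,
      hG.constantCoeff_eq_zero three_ne_zero])
  refine ⟨v, hv0, fun i => ?_⟩
  simp [hFQG, sq, hv]

/-- A quartic surface in `ℙ³(ℂ)` possessing a trope is singular: if a nonzero
quartic form `F` can be written as `Q² + ℓ·G` with `ℓ` a nonzero linear form,
`Q` a quadratic form and `G` a cubic form, then there is a nonzero point where
all four partial derivatives of `F` vanish. -/
theorem stmt9 (F Q ℓ G : MvPolynomial (Fin 4) ℂ)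
    (hF : F.IsHomogeneous 4) (hF0 : F ≠ 0)
    (hQ : Q.IsHomogeneous 2)
    (hℓ : ℓ.IsHomogeneous 1) (hℓ0 : ℓ ≠ 0)
    (hG : G.IsHomogeneous 3)
    (hFQG : F = Q ^ 2 + ℓ * G) :
    ∃ v : Fin 4 → ℂ, v ≠ 0 ∧ ∀ i : Fin 4, eval v (pderiv i F) = 0 :=
  stmt9_general F Q ℓ G hQ hℓ hG hFQG
end

section
/- Let K be a field of characteristic zero, let f be a homogeneous polynomial of degree 3 in n variables over K, and let q ∈ Kⁿ be a point at which all n partial derivatives of f vanish (a singular point of the cubic; note f(q) = 0 then follows by Euler's identity). Then for every p ∈ Kⁿ, f( (Σᵢ qᵢ·(∂f/∂xᵢ)(p))·p − f(p)·q ) = 0. Geometrically: the line through an arbitrary point p and a singular point q of the cubic hypersurface {f = 0} meets the cubic in the third point ((q·∇f)(p))·p − f(p)·q. -/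
/-!
Write `x·∇` for the directional derivative along `x`. In characteristic zero a cubic form is
recovered from its third derivatives, `6 f(w) = ((w·∇)³ f)(w)`, by Euler's identity, and the
operators `x·∇` commute. Expanding `(a p + b q)·∇` cubed therefore gives
`f(a p + b q) = a³ f(p) + a²b ((q·∇)f)(p) + ab² ((p·∇)f)(q) + b³ f(q)`, each term being evaluated
by Euler's identity because third derivatives of a cubic are constant. At a singular point `q`
both `f(q)` and `((p·∇)f)(q)` vanish, so the expansion is `a² (a f(p) + b ((q·∇)f)(p))`, which is
zero for `a = ((q·∇)f)(p)` and `b = -f(p)`.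
-/

open MvPolynomial

namespace MvPolynomial

lemma eval_eq_of_isHomogeneous_zero {σ R : Type*} [CommSemiring R] {g : MvPolynomial σ R}
    (hg : g.IsHomogeneous 0) (x y : σ → R) : eval x g = eval y g := by
  rw [totalDegree_eq_zero_iff_eq_C.mp ((totalDegree_zero_iff_isHomogeneous _).mpr hg)]
  simp only [eval_C]

variable {σ R : Type*} [Fintype σ] [CommRing R]

noncomputable def dirDeriv :
    (σ → R) →ₗ[R] Derivation R (MvPolynomial σ R) (MvPolynomial σ R) :=
  Fintype.linearCombination R pderiv

lemma dirDeriv_apply (x : σ → R) (g : MvPolynomial σ R) :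
    dirDeriv x g = ∑ i, x i • pderiv i g := by
  rw [dirDeriv, Fintype.linearCombination_apply, ← Derivation.coeFnAddMonoidHom_apply, map_sum,
    Finset.sum_apply]
  rfl

lemma eval_dirDeriv (w x : σ → R) (g : MvPolynomial σ R) :
    eval w (dirDeriv x g) = ∑ i, x i * eval w (pderiv i g) := by
  simp [dirDeriv_apply, smul_eval]

lemma dirDeriv_X (x : σ → R) (i : σ) : dirDeriv x (X i) = C (x i) := by
  classical
  simp [dirDeriv_apply, pderiv_X, Pi.single_apply, smul_eq_C_mul]

lemma dirDeriv_comm (x y : σ → R) (g : MvPolynomial σ R) :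
    dirDeriv x (dirDeriv y g) = dirDeriv y (dirDeriv x g) := by
  have h : ⁅dirDeriv x, dirDeriv y⁆ = 0 :=
    derivation_ext fun i => by simp [Derivation.commutator_apply, dirDeriv_X]
  rw [← sub_eq_zero, ← Derivation.commutator_apply, h, Derivation.zero_apply]

protected lemma IsHomogeneous.dirDeriv {g : MvPolynomial σ R} {m : ℕ} (hg : g.IsHomogeneous m)
    (x : σ → R) : (dirDeriv x g).IsHomogeneous (m - 1) := by
  rw [dirDeriv_apply]
  exact IsHomogeneous.sum _ _ _ fun i _ => smul_eq_C_mul (pderiv i g) (x i) ▸ hg.pderiv.C_mul _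

lemma IsHomogeneous.eval_dirDeriv_self {g : MvPolynomial σ R} {m : ℕ} (hg : g.IsHomogeneous m)
    (x : σ → R) : eval x (dirDeriv x g) = m * eval x g := by
  simpa [eval_dirDeriv] using congr(eval x $(hg.sum_X_mul_pderiv))

variable {f : MvPolynomial σ R}

lemma IsHomogeneous.eval_dirDeriv_dirDeriv_dirDeriv (hf : f.IsHomogeneous 3) (u v w : σ → R) :
    eval w (dirDeriv v (dirDeriv v (dirDeriv u f))) = 2 * eval v (dirDeriv u f) := by
  have h2 : (dirDeriv u f).IsHomogeneous 2 := hf.dirDeriv u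
  have h1 : (dirDeriv v (dirDeriv u f)).IsHomogeneous 1 := h2.dirDeriv v
  rw [eval_eq_of_isHomogeneous_zero (h1.dirDeriv v) w v, h1.eval_dirDeriv_self,
    h2.eval_dirDeriv_self]
  push_cast
  ring

theorem IsHomogeneous.eval_smul_add_smul [IsDomain R] [CharZero R] (hf : f.IsHomogeneous 3)
    (a b : R) (x y : σ → R) :
    eval (a • x + b • y) f = a ^ 3 * eval x f + a ^ 2 * b * eval x (dirDeriv y f)
      + a * b ^ 2 * eval y (dirDeriv x f) + b ^ 3 * eval y f := by
  refine mul_left_cancel₀ (by norm_num : (6 : R) ≠ 0) ?_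
  have h6 : 6 * eval (a • x + b • y) f = eval (a • x + b • y) (dirDeriv (a • x + b • y)
      (dirDeriv (a • x + b • y) (dirDeriv (a • x + b • y) f))) := by
    rw [hf.eval_dirDeriv_dirDeriv_dirDeriv, hf.eval_dirDeriv_self]
    push_cast
    ring
  have hxyy : dirDeriv x (dirDeriv y (dirDeriv y f)) = dirDeriv y (dirDeriv y (dirDeriv x f)) := by
    rw [dirDeriv_comm x y, dirDeriv_comm x y f]
  rw [h6]
  simp only [map_add, map_smul, Derivation.add_apply, Derivation.smul_apply, Derivation.map_smul,
    smul_eval]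
  simp only [dirDeriv_comm]
  rw [hxyy]
  simp only [hf.eval_dirDeriv_dirDeriv_dirDeriv, hf.eval_dirDeriv_self]
  push_cast
  ring

end MvPolynomial

/-- The line through an arbitrary point `p` and a singular point `q` of a cubic
hypersurface `{f = 0}` meets the cubic in the third point
`((q·∇f)(p))·p − f(p)·q`. -/
theorem stmt11 (K : Type*) [Field K] [CharZero K] (n : ℕ)
    (f : MvPolynomial (Fin n) K) (hf : f.IsHomogeneous 3)
    (q : Fin n → K) (hq : ∀ i, eval q (pderiv i f) = 0)
    (p : Fin n → K) :
    eval ((∑ i, q i * eval p (pderiv i f)) • p - (eval p f) • q) f = 0 := by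
  have hfq : eval q f = 0 := by
    simpa [eval_dirDeriv, hq] using (hf.eval_dirDeriv_self q).symm
  have hpq : eval q (dirDeriv p f) = 0 := by
    simp [eval_dirDeriv, hq]
  rw [sub_eq_add_neg, ← neg_smul, hf.eval_smul_add_smul, hfq, hpq, eval_dirDeriv]
  ring
end

section
/- Let (A,B,C,D,E) = (1,87,15,39,21) and evaluate Δ and the linear forms of the context at this point. Define the ten rational numbers d₁ = −Δ·A·q₊C·q₋C, d₂ = −Δ·A·q₊D·q₋D, d₃ = −Δ·A·q₊E·q₋E, d₄ = Δ·q₊C·p₊0·p₋1, d₅ = Δ·q₊C·p₋0·p₊1, d₆ = Δ·q₊D·p₊0·p₋2, d₇ = Δ·q₊D·p₋0·p₊2, d₈ = Δ·q₊E·p₊0·p₋3, d₉ = Δ·q₊E·p₋0·p₊3, d₁₀ = −Δ·q₋C·p₊2·p₋3. Then the images of d₁,…,d₁₀ in ℚˣ/(ℚˣ)² are linearly independent over 𝔽₂; equivalently, the field L = ℚ(√d₁,…,√d₁₀) (inside ℂ) satisfies [L : ℚ] = 2¹⁰ and Gal(L/ℚ) ≅ (ℤ/2ℤ)¹⁰.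 (This is the field over which the 320 conics on the Heisenberg-invariant quartic K3 surface X_{[1:87:15:39:21]} are defined.) -/
/-!
Every `dᵢ` is `Δ = 47977` times a squarefree cofactor (up to the square `5²` in `d₉`), and the
cofactors can be ordered so that each has a prime factor dividing none of the later `dⱼ`. In a
nonempty product, the prime attached to the earliest factor then occurs to the first power, so
the product is not a square.

For the field, adjoin the square roots one at a time: by induction, every element of
`F(√dⱼ : j ∈ t)` whose square lies in `F` is `c · ∏_{j ∈ u} √dⱼ` with `c ∈ F`, `u ⊆ t`, so the
next root is never already there and each step doubles the degree. The field is the splitting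
field of `∏ (X² − dᵢ)`, hence Galois, and every automorphism only changes signs of the `√dᵢ`,
so the Galois group is an elementary abelian `2`-group of order `2¹⁰`.
-/

namespace Stmt15

/-- The parameter point `(A,B,C,D,E) = (1,87,15,39,21)`. -/
def A : ℚ := 1
def B : ℚ := 87
def C : ℚ := 15
def D : ℚ := 39
def E : ℚ := 21

def Δ : ℚ := 16 * A ^ 3 + A * B ^ 2 - 4 * A * (C ^ 2 + D ^ 2 + E ^ 2) + 4 * C * D * E
def qpC : ℚ := 2 * A + C
def qmC : ℚ := 2 * A - C
def qpD : ℚ := 2 * A + D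
def qmD : ℚ := 2 * A - D
def qpE : ℚ := 2 * A + E
def qmE : ℚ := 2 * A - E
def pp0 : ℚ := 4 * A + B + 2 * C + 2 * D + 2 * E
def pm0 : ℚ := 4 * A - B + 2 * C + 2 * D + 2 * E
def pp1 : ℚ := 4 * A + B + 2 * C - 2 * D - 2 * E
def pm1 : ℚ := 4 * A - B + 2 * C - 2 * D - 2 * E
def pp2 : ℚ := 4 * A + B - 2 * C + 2 * D - 2 * E
def pm2 : ℚ := 4 * A - B - 2 * C + 2 * D - 2 * E
def pp3 : ℚ := 4 * A + B - 2 * C - 2 * D + 2 * E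
def pm3 : ℚ := 4 * A - B - 2 * C - 2 * D + 2 * E

/-- The ten discriminants `d₁,…,d₁₀` over which the 320 conics on
`X_{[1:87:15:39:21]}` are defined. -/
def d : Fin 10 → ℚ :=
  ![-(Δ * A * qpC * qmC), -(Δ * A * qpD * qmD), -(Δ * A * qpE * qmE),
    Δ * qpC * pp0 * pm1, Δ * qpC * pm0 * pp1,
    Δ * qpD * pp0 * pm2, Δ * qpD * pm0 * pp2,
    Δ * qpE * pp0 * pm3, Δ * qpE * pm0 * pp3,
    -(Δ * qmC * pp2 * pm3)]


end Stmt15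

def IndependentModSquares {M ι : Type*} [CommMonoid M] (d : ι → M) : Prop :=
  ∀ s : Finset ι, s.Nonempty → ¬ IsSquare (∏ i ∈ s, d i)

theorem Prime.not_isSquare_of_not_sq_dvd {M : Type*} [CommMonoidWithZero M] {p n : M}
    (hp : Prime p) (hdvd : p ∣ n) (hsq : ¬ p ^ 2 ∣ n) : ¬ IsSquare n := by
  rintro ⟨m, rfl⟩
  have hm : p ∣ m := hp.dvd_of_dvd_pow (pow_two m ▸ hdvd)
  exact hsq (pow_two p ▸ mul_dvd_mul hm hm)

theorem independentModSquares_of_triangular {M ι α : Type*} [CommMonoidWithZero M]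
    [IsCancelMulZero M] [LinearOrder α] {d p : ι → M} {rank : ι → α}
    (hrank : Function.Injective rank) (hp : ∀ i, Prime (p i)) (hdvd : ∀ i, p i ∣ d i)
    (hsq : ∀ i, ¬ p i ^ 2 ∣ d i) (htri : ∀ i j, rank i < rank j → ¬ p i ∣ d j) :
    IndependentModSquares d := by
  classical
  intro s hs
  obtain ⟨i, hi, hmin⟩ := s.exists_min_image rank hs
  have hrest : ¬ p i ∣ ∏ j ∈ s.erase i, d j := by
    rw [(hp i).dvd_finsetProd_iff]
    rintro ⟨j, hj, hdj⟩
    exact htri i j (lt_of_le_of_ne (hmin j (Finset.mem_of_mem_erase hj))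
      (hrank.ne (Finset.ne_of_mem_erase hj).symm)) hdj
  rw [← Finset.mul_prod_erase s d hi]
  exact (hp i).not_isSquare_of_not_sq_dvd (dvd_mul_of_dvd_left (hdvd i) _)
    fun h => hsq i ((hp i).pow_dvd_of_dvd_mul_right 2 hrest h)

section FieldTheory

open IntermediateField Polynomial Module

section QuadraticStep

variable {F E : Type*} [Field F] [Field E] [Algebra F E] {K : IntermediateField F E} {α : E}

theorem IntermediateField.isIntegral_of_sq_mem (hα2 : α ^ 2 ∈ K) : IsIntegral K α :=
  ⟨X ^ 2 - C ⟨α ^ 2, hα2⟩, monic_X_pow_sub_C _ two_ne_zero, by simp⟩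

theorem IntermediateField.exists_eq_add_mul_of_mem_adjoin_sqrt (hα2 : α ^ 2 ∈ K) {x : E}
    (hx : x ∈ K⟮α⟯) : ∃ a ∈ K, ∃ b ∈ K, x = a + b * α := by
  rw [← mem_toSubalgebra, adjoin_simple_toSubalgebra_of_isAlgebraic
    (isIntegral_of_sq_mem hα2).isAlgebraic, Algebra.adjoin_singleton_eq_range_aeval] at hx
  obtain ⟨p, rfl⟩ := hx
  set g : K[X] := X ^ 2 - C ⟨α ^ 2, hα2⟩
  have hg : g.natDegree = 2 := natDegree_X_pow_sub_C
  have hdeg : (p %ₘ g).natDegree < 2 :=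
    hg ▸ natDegree_modByMonic_lt p (monic_X_pow_sub_C _ two_ne_zero)
      fun h => by simp [h] at hg
  obtain ⟨b, a, hab⟩ := exists_eq_X_add_C_of_natDegree_le_one (Nat.le_of_lt_succ hdeg)
  refine ⟨a, a.2, b, b.2, ?_⟩
  rw [AlgHom.toRingHom_eq_coe, RingHom.coe_coe,
    ← aeval_modByMonic_eq_self_of_root (q := g) (by simp [g]), hab]
  simp [add_comm]

theorem IntermediateField.finrank_adjoin_sqrt (hα2 : α ^ 2 ∈ K) (hα : α ∉ K) :
    finrank K K⟮α⟯ = 2 := by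
  have hirr : Irreducible (X ^ 2 - C (⟨α ^ 2, hα2⟩ : K)) := by
    refine X_pow_sub_C_irreducible_of_prime Nat.prime_two fun b hb => ?_
    rcases sq_eq_sq_iff_eq_or_eq_neg.mp (congrArg Subtype.val hb) with h | h
    · exact hα (h ▸ b.2)
    · exact hα (neg_eq_iff_eq_neg.mp h.symm ▸ neg_mem b.2)
  rw [adjoin.finrank (isIntegral_of_sq_mem hα2), ← minpoly.eq_of_irreducible_of_monic hirr
    (by simp) (monic_X_pow_sub_C _ two_ne_zero), natDegree_X_pow_sub_C]

theorem IntermediateField.eq_zero_or_eq_zero_of_add_mul_sqrt_sq_mem (h2 : (2 : E) ≠ 0)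
    (hα2 : α ^ 2 ∈ K) (hα : α ∉ K) {a b : E} (ha : a ∈ K) (hb : b ∈ K)
    (hsq : (a + b * α) ^ 2 ∈ K) : a = 0 ∨ b = 0 := by
  by_contra! hab
  apply hα
  have : α = ((a + b * α) ^ 2 - a ^ 2 - b ^ 2 * α ^ 2) / (2 * a * b) := by
    field_simp [hab.1, hab.2]; ring
  rw [this]
  exact div_mem (sub_mem (sub_mem hsq (pow_mem ha 2)) (mul_mem (pow_mem hb 2) hα2))
    (mul_mem (mul_mem (ofNat_mem K 2) ha) hb)

end QuadraticStep

section Multiquadratic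

variable (F : Type*) {E ι : Type*} [Field F] [Field E] [Algebra F E]

def SqrtsAreMonomials (r : ι → E) (t : Finset ι) : Prop :=
  ∀ x ∈ adjoin F (r '' t), x ^ 2 ∈ (⊥ : IntermediateField F E) →
    ∃ c ∈ (⊥ : IntermediateField F E), ∃ u ⊆ t, x = c * ∏ i ∈ u, r i

variable {F} {d : ι → F} {r : ι → E}

theorem sqrt_notMem_adjoin (hr : ∀ i, r i ^ 2 = algebraMap F E (d i))
    (hd : IndependentModSquares d) {t : Finset ι} {j : ι} (hj : j ∉ t)
    (ht : SqrtsAreMonomials F r t) : r j ∉ adjoin F (r '' t) := by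
  classical
  intro hmem
  obtain ⟨c, hc, u, hut, hx⟩ := ht _ hmem (hr j ▸ IntermediateField.algebraMap_mem _ _)
  obtain ⟨c, rfl⟩ := mem_bot.mp hc
  refine hd (insert j u) (Finset.insert_nonempty _ _) ⟨c * ∏ i ∈ u, d i, ?_⟩
  apply FaithfulSMul.algebraMap_injective F E
  rw [Finset.prod_insert fun h => hj (hut h)]
  simp only [map_mul, map_prod, ← hr, hx, Finset.prod_pow]
  ring

theorem adjoin_image_insert [DecidableEq ι] (t : Finset ι) (j : ι) :
    adjoin F (r '' ↑(insert j t)) = (adjoin (adjoin F (r '' t)) {r j}).restrictScalars F := by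
  rw [adjoin_adjoin_left, Finset.coe_insert, Set.image_insert_eq, Set.union_comm,
    Set.insert_eq]

theorem finrank_adjoin_image_insert [DecidableEq ι] (hr : ∀ i, r i ^ 2 = algebraMap F E (d i))
    {t : Finset ι} {j : ι} (hj : r j ∉ adjoin F (r '' t)) :
    finrank F (adjoin F (r '' ↑(insert j t))) = 2 * finrank F (adjoin F (r '' t)) := by
  rw [adjoin_image_insert]
  change finrank F (adjoin (adjoin F (r '' t)) {r j}) = _
  rw [← finrank_mul_finrank F (adjoin F (r '' t)),
    finrank_adjoin_sqrt (hr j ▸ IntermediateField.algebraMap_mem _ _) hj, mul_comm]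

theorem sqrtsAreMonomials_insert [DecidableEq ι] (h2 : (2 : E) ≠ 0)
    (hr : ∀ i, r i ^ 2 = algebraMap F E (d i)) {t : Finset ι} {j : ι}
    (ht : SqrtsAreMonomials F r t) (hj : r j ∉ adjoin F (r '' t)) :
    SqrtsAreMonomials F r (insert j t) := by
  have hjt : j ∉ t := fun h => hj (subset_adjoin _ _ ⟨j, h, rfl⟩)
  have hsq : r j ^ 2 ∈ (⊥ : IntermediateField F E) :=
    hr j ▸ IntermediateField.algebraMap_mem _ _
  have hbot : (⊥ : IntermediateField F E) ≤ adjoin F (r '' t) := bot_le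
  intro x hx hx2
  rw [adjoin_image_insert, mem_restrictScalars] at hx
  obtain ⟨a, ha, b, hb, rfl⟩ := exists_eq_add_mul_of_mem_adjoin_sqrt (hbot hsq) hx
  rcases eq_zero_or_eq_zero_of_add_mul_sqrt_sq_mem h2 (hbot hsq) hj ha hb (hbot hx2)
    with rfl | rfl
  · have hb2 : b ^ 2 ∈ (⊥ : IntermediateField F E) := by
      have hrj : r j ≠ 0 := fun h => hj (h ▸ zero_mem _)
      have : b ^ 2 = (0 + b * r j) ^ 2 / r j ^ 2 := by field_simp; ring
      exact this ▸ div_mem hx2 hsq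
    obtain ⟨c, hc, u, hut, rfl⟩ := ht b hb hb2
    refine ⟨c, hc, insert j u, Finset.insert_subset_insert _ hut, ?_⟩
    rw [Finset.prod_insert fun h => hjt (hut h)]
    ring
  · obtain ⟨c, hc, u, hut, rfl⟩ := ht a ha (by simpa using hx2)
    exact ⟨c, hc, u, hut.trans (Finset.subset_insert _ _), by ring⟩

theorem finrank_adjoin_image_and_sqrtsAreMonomials (h2 : (2 : E) ≠ 0)
    (hr : ∀ i, r i ^ 2 = algebraMap F E (d i)) (hd : IndependentModSquares d) (t : Finset ι) :
    finrank F (adjoin F (r '' t)) = 2 ^ t.card ∧ SqrtsAreMonomials F r t := by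
  classical
  induction t using Finset.induction_on with
  | empty =>
    refine ⟨by simp, fun x hx _ => ⟨x, by simpa using hx, ∅, subset_rfl, by simp⟩⟩
  | insert j t hjt ih =>
    obtain ⟨hrank, ht⟩ := ih
    have hj := sqrt_notMem_adjoin hr hd hjt ht
    refine ⟨?_, sqrtsAreMonomials_insert h2 hr ht hj⟩
    rw [finrank_adjoin_image_insert hr hj, hrank, Finset.card_insert_of_notMem hjt, pow_succ']

theorem finrank_adjoin_range_sqrt [Fintype ι] (h2 : (2 : E) ≠ 0)
    (hr : ∀ i, r i ^ 2 = algebraMap F E (d i)) (hd : IndependentModSquares d) :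
    finrank F (adjoin F (Set.range r)) = 2 ^ Fintype.card ι := by
  have := (finrank_adjoin_image_and_sqrtsAreMonomials h2 hr hd Finset.univ).1
  rwa [Finset.coe_univ, Set.image_univ] at this

end Multiquadratic

theorem nonempty_mulEquiv_pi_zmod_two_of_mul_self_eq_one {G ι : Type*} [Group G] [Finite G]
    [Fintype ι] (hcard : Nat.card G = 2 ^ Fintype.card ι) (hG : ∀ g : G, g * g = 1) :
    Nonempty (G ≃* (ι → Multiplicative (ZMod 2))) := by
  have hinv (g : G) : g⁻¹ = g := inv_eq_of_mul_eq_one_right (hG g)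
  let : CommGroup G :=
    { mul_comm := fun a b => by rw [← hinv (a * b), mul_inv_rev, hinv, hinv] }
  let : Module (ZMod 2) (Additive G) :=
    AddCommGroup.zmodModule fun x => by rw [two_nsmul]; exact hG x.toMul
  have : Module.Finite (ZMod 2) (Additive G) := Module.Finite.of_finite
  have hrank : finrank (ZMod 2) (Additive G) = finrank (ZMod 2) (ι → ZMod 2) := by
    rw [Module.finrank_fintype_fun_eq_card]
    apply Nat.pow_right_injective le_rfl
    dsimp only
    rw [← hcard, ← Nat.card_congr Additive.toMul, Module.natCard_eq_pow_finrank (K := ZMod 2),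
      Nat.card_zmod]
  obtain ⟨e⟩ := FiniteDimensional.nonempty_linearEquiv_of_finrank_eq hrank
  exact ⟨(MulEquiv.multiplicativeAdditive G).symm.trans
    ((AddEquiv.toMultiplicative e.toAddEquiv).trans (MulEquiv.piMultiplicative _))⟩

theorem IntermediateField.mul_self_eq_one_of_eq_adjoin {F E : Type*} [Field F] [Field E]
    [Algebra F E] {K : IntermediateField F E} {S : Set E} (hK : K = adjoin F S)
    (hS : ∀ s ∈ S, s ^ 2 ∈ (⊥ : IntermediateField F E)) (σ : K ≃ₐ[F] K) : σ * σ = 1 := by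
  suffices h : (σ * σ).toAlgHom = AlgHom.id F K from
    AlgEquiv.ext fun x => DFunLike.congr_fun h x
  refine algHom_ext_of_eq_adjoin F hK fun s hs => ?_
  set y : K := ⟨s, hK.ge (subset_adjoin _ _ hs)⟩
  obtain ⟨q, hq⟩ := mem_bot.mp (hS s hs)
  have hy : y ^ 2 = algebraMap F K q := Subtype.ext hq.symm
  have hσy : σ y ^ 2 = y ^ 2 := by rw [← map_pow, hy, AlgEquiv.commutes]
  rcases sq_eq_sq_iff_eq_or_eq_neg.mp hσy with h | h <;> simp [AlgEquiv.mul_apply, h]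

section Galois

variable {F E ι : Type*} [Field F] [Field E] [Algebra F E]

theorem rootSet_prod_X_sq_sub_C [Fintype ι] (d : ι → F) :
    (∏ i, (X ^ 2 - C (d i))).rootSet E = {z | ∃ i, z ^ 2 = algebraMap F E (d i)} := by
  have hf := monic_prod_of_monic Finset.univ _ fun i _ => monic_X_pow_sub_C (d i) two_ne_zero
  ext z
  simp [mem_rootSet, hf.ne_zero, Finset.prod_eq_zero_iff, sub_eq_zero]

theorem isGalois_adjoin_setOf_sq_eq [Fintype ι] [IsAlgClosed E] [PerfectField F] (d : ι → F) :
    IsGalois F (adjoin F {z : E | ∃ i, z ^ 2 = algebraMap F E (d i)}) := by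
  set f : F[X] := ∏ i, (X ^ 2 - C (d i))
  rw [← rootSet_prod_X_sq_sub_C]
  have := adjoin_rootSet_isSplittingField (IsAlgClosed.splits (f.map (algebraMap F E)))
  have := Normal.of_isSplittingField (E := adjoin F (f.rootSet E)) f
  exact ⟨⟩

theorem adjoin_setOf_sq_eq_adjoin_range {d : ι → F} {r : ι → E}
    (hr : ∀ i, r i ^ 2 = algebraMap F E (d i)) :
    adjoin F {z | ∃ i, z ^ 2 = algebraMap F E (d i)} = adjoin F (Set.range r) := by
  refine le_antisymm (adjoin_le_iff.mpr ?_) (adjoin.mono _ _ _ ?_)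
  · rintro z ⟨i, hz⟩
    have hri : r i ∈ adjoin F (Set.range r) := subset_adjoin _ _ ⟨i, rfl⟩
    rcases sq_eq_sq_iff_eq_or_eq_neg.mp (hz.trans (hr i).symm) with rfl | rfl
    exacts [hri, neg_mem hri]
  · rintro _ ⟨i, rfl⟩
    exact ⟨i, hr i⟩

theorem finrank_and_galoisGroup_adjoin_sqrt [Fintype ι] [IsAlgClosed E] [PerfectField F]
    {d : ι → F} (h2 : (2 : E) ≠ 0) (hd : IndependentModSquares d) (L : IntermediateField F E)
    (hL : L = adjoin F {z | ∃ i, z ^ 2 = algebraMap F E (d i)}) :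
    finrank F L = 2 ^ Fintype.card ι ∧
      Nonempty ((L ≃ₐ[F] L) ≃* (ι → Multiplicative (ZMod 2))) := by
  choose r hr using fun i => IsAlgClosed.exists_pow_nat_eq (algebraMap F E (d i)) two_pos
  have hrank : finrank F L = 2 ^ Fintype.card ι := by
    rw [hL, adjoin_setOf_sq_eq_adjoin_range hr]
    exact finrank_adjoin_range_sqrt h2 hr hd
  have : FiniteDimensional F L := FiniteDimensional.of_finrank_pos (by rw [hrank]; positivity)
  have : IsGalois F L := hL ▸ isGalois_adjoin_setOf_sq_eq d
  refine ⟨hrank, nonempty_mulEquiv_pi_zmod_two_of_mul_self_eq_one ?_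
    (mul_self_eq_one_of_eq_adjoin hL ?_)⟩
  · rw [IsGalois.card_aut_eq_finrank, hrank]
  · rintro z ⟨i, hz⟩
    exact hz ▸ IntermediateField.algebraMap_mem _ _

end Galois

end FieldTheory

namespace Stmt15

-- `Δ = 47977`, and `dᵢ / Δ` is `13·17, 37·41, 19·23, −17·173·241, 17·67, −7·11·41·241,
-- 41·67·97, −23·149·241, 5²·23·67, −13·97·149`.
def dNum : Fin 10 → ℤ :=
  ![10602917, 72781109, 20965949, -34005186037, 54645803, -36502676749,
    12783903443, -39624540139, 1848313925, -9014350553]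

theorem d_eq_dNum (i : Fin 10) : d i = dNum i := by
  fin_cases i <;>
    norm_num [d, dNum, A, B, C, D, E, Δ, qpC, qmC, qpD, qmD, qpE, qmE,
      pp0, pm0, pp1, pm1, pp2, pm2, pp3, pm3]

def witnessPrime : Fin 10 → ℤ := ![13, 37, 19, 173, 17, 7, 97, 241, 67, 149]

def eliminationRank : Fin 10 → ℕ := ![6, 0, 1, 2, 8, 3, 7, 4, 9, 5]

theorem independentModSquares_dNum : IndependentModSquares dNum :=
  independentModSquares_of_triangular (p := witnessPrime) (rank := eliminationRank) (by decide)
    (fun i => by rw [Int.prime_iff_natAbs_prime]; fin_cases i <;> norm_num [witnessPrime])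
    (by decide) (by decide) (by decide)

theorem independentModSquares_d : IndependentModSquares d := by
  intro s hs hsq
  rw [Finset.prod_congr rfl fun i _ => d_eq_dNum i, ← Int.cast_prod,
    Rat.isSquare_intCast_iff] at hsq
  exact independentModSquares_dNum s hs hsq

/-- The images of `d₁,…,d₁₀` in `ℚˣ/(ℚˣ)²` are linearly independent over `𝔽₂`:
no nonempty product of distinct `dᵢ`'s is a rational square. Equivalently, the
field `L = ℚ(√d₁,…,√d₁₀) ⊂ ℂ` satisfies `[L : ℚ] = 2¹⁰` and
`Gal(L/ℚ) ≅ (ℤ/2ℤ)¹⁰`. -/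
theorem stmt15 :
    (∀ s : Finset (Fin 10), s.Nonempty → ¬∃ r : ℚ, r ^ 2 = ∏ i ∈ s, d i) ∧
    (∀ L : IntermediateField ℚ ℂ,
      L = IntermediateField.adjoin ℚ {z : ℂ | ∃ i : Fin 10, z ^ 2 = (d i : ℂ)} →
      Module.finrank ℚ L = 2 ^ 10 ∧
        Nonempty ((L ≃ₐ[ℚ] L) ≃* (Fin 10 → Multiplicative (ZMod 2)))) := by
  refine ⟨fun s hs ⟨r, hr⟩ => independentModSquares_d s hs ⟨r, hr ▸ sq r⟩, fun L hL => ?_⟩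
  have hL' : L = IntermediateField.adjoin ℚ {z : ℂ | ∃ i, z ^ 2 = algebraMap ℚ ℂ (d i)} := by
    simpa using hL
  have h := finrank_and_galoisGroup_adjoin_sqrt two_ne_zero independentModSquares_d L hL'
  rwa [Fintype.card_fin] at h

end Stmt15
end
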